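/- arXiv:2504.09300 — 3 statements merged into one kernel-verified Lean document; each statement's English description precedes it below -/
import Mathlib

section
/- Let B ⊆ [m]×[n] be a board and q a prime power. Then (q−1)^{m+n−C(G(B))} divides #S_d(B,q), where C(G(B)) is the number of connected components of the bipartite graph G(B). -/
/-- `sCount B F d` is the number of matrices over `F` of rank `d`
whose support is exactly `B`. -/
noncomputable def sCount {m n : ℕ} (B : Finset (Fin m × Fin n))
    (F : Type) [Field F] [Fintype F] (d : ℕ) : ℕ :=
  Nat.card {A : Matrix (Fin m) (Fin n) F // A.rank = d ∧ ∀ i j, A i j ≠ 0 ↔ (i, j) ∈ B}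

/-- The bipartite graph of a board: vertices are `[m] ⊔ [n]`, with an edge between
row vertex `i` and column vertex `j` for each cell `(i,j) ∈ B`. -/
def boardGraph {m n : ℕ} (B : Finset (Fin m × Fin n)) : SimpleGraph (Fin m ⊕ Fin n) :=
  SimpleGraph.fromRel (fun u v => ∃ i j, (i, j) ∈ B ∧ u = Sum.inl i ∧ v = Sum.inr j)

/-!
The torus `(Fˣ)^m × (Fˣ)^n` acts on the matrices of rank `d` and support `B` by scaling rows and
columns, `A ↦ diag(s) A diag(t)`. Every such matrix has the same stabilizer
`H = {(s, t) | s i * t j = 1 for (i, j) ∈ B}`, and `(s, t) ↦ (s, t⁻¹)` identifies `H` with the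
functions `[m] ⊔ [n] → Fˣ` that are constant on the connected components of `G(B)`, so
`|H| = (q-1)^C`. Hence every orbit has exactly `[T : H] = (q-1)^(m+n-C)` elements.
-/

open Matrix MulAction

namespace SimpleGraph

variable {V : Type*} {G : SimpleGraph V} {β : Type*}

theorem Walk.apply_eq_of_forall_adj {f : V → β} (hf : ∀ u v, G.Adj u v → f u = f v)
    {u v : V} (p : G.Walk u v) : f u = f v := by
  induction p with
  | nil => rfl
  | cons h _ ih => exact (hf _ _ h).trans ih

variable (G β) in
def adjInvariantFunEquiv :
    {f : V → β // ∀ u v, G.Adj u v → f u = f v} ≃ (G.ConnectedComponent → β) where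
  toFun f := ConnectedComponent.lift f.1 fun _ _ p _ => p.apply_eq_of_forall_adj f.2
  invFun g := ⟨g ∘ G.connectedComponentMk,
    fun _ _ h => congrArg g (ConnectedComponent.connectedComponentMk_eq_of_adj h)⟩
  left_inv _ := rfl
  right_inv _ := funext fun c => c.ind fun _ => rfl

end SimpleGraph

section BoardGraph

variable {m n : ℕ} (B : Finset (Fin m × Fin n))

theorem boardGraph_adj_inl_inr {i : Fin m} {j : Fin n} :
    (boardGraph B).Adj (Sum.inl i) (Sum.inr j) ↔ (i, j) ∈ B := by
  simp [boardGraph]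

theorem forall_adj_boardGraph_iff {β : Type*} {f : Fin m ⊕ Fin n → β} :
    (∀ u v, (boardGraph B).Adj u v → f u = f v) ↔
      ∀ i j, (i, j) ∈ B → f (Sum.inl i) = f (Sum.inr j) := by
  refine ⟨fun hf i j hij => hf _ _ ((boardGraph_adj_inl_inr B).2 hij), fun hf u v huv => ?_⟩
  simp only [boardGraph, SimpleGraph.fromRel_adj] at huv
  rcases huv.2 with ⟨i, j, hij, rfl, rfl⟩ | ⟨i, j, hij, rfl, rfl⟩
  exacts [hf i j hij, (hf i j hij).symm]

end BoardGraph

section Stabilizer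

variable {m n : Type*} (M : Type*) [CommGroup M]

def boardStabilizer (B : Set (m × n)) : Subgroup ((m → M) × (n → M)) where
  carrier := {g | ∀ i j, (i, j) ∈ B → g.1 i * g.2 j = 1}
  one_mem' _ _ _ := mul_one 1
  mul_mem' {g h} hg hh i j hij := by
    simp only [Prod.fst_mul, Prod.snd_mul, Pi.mul_apply]
    rw [mul_mul_mul_comm, hg i j hij, hh i j hij, one_mul]
  inv_mem' {g} hg i j hij := by
    simp only [Prod.fst_inv, Prod.snd_inv, Pi.inv_apply]
    rw [← mul_inv, hg i j hij, inv_one]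

variable {M} in
theorem mem_boardStabilizer {B : Set (m × n)} {g : (m → M) × (n → M)} :
    g ∈ boardStabilizer M B ↔ ∀ i j, (i, j) ∈ B → g.1 i * g.2 j = 1 :=
  Iff.rfl

theorem card_boardStabilizer {m n : ℕ} (B : Finset (Fin m × Fin n)) :
    Nat.card (boardStabilizer M (B : Set (Fin m × Fin n))) =
      Nat.card M ^ Nat.card (boardGraph B).ConnectedComponent := by
  let e : (Fin m → M) × (Fin n → M) ≃ (Fin m ⊕ Fin n → M) :=
    ((Equiv.refl _).prodCongr (Equiv.inv _)).trans (Equiv.sumArrowEquivProdArrow _ _ _).symm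
  have he : ∀ g, g ∈ boardStabilizer M (B : Set (Fin m × Fin n)) ↔
      ∀ u v, (boardGraph B).Adj u v → e g u = e g v := fun ⟨s, t⟩ => by
    rw [forall_adj_boardGraph_iff]
    simp [e, mem_boardStabilizer, eq_inv_iff_mul_eq_one]
  rw [Nat.card_congr ((Equiv.subtypeEquiv e he).trans (SimpleGraph.adjInvariantFunEquiv _ M)),
    Nat.card_fun]

theorem index_boardStabilizer [Finite M] {m n : ℕ} (B : Finset (Fin m × Fin n)) :
    (boardStabilizer M (B : Set (Fin m × Fin n))).index =
      Nat.card M ^ (m + n - Nat.card (boardGraph B).ConnectedComponent) := by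
  have hC : Nat.card (boardGraph B).ConnectedComponent ≤ m + n := by
    simpa only [Nat.card_sum, Nat.card_fin] using
      Nat.card_le_card_of_surjective (boardGraph B).connectedComponentMk Quot.mk_surjective
  have key := (boardStabilizer M (B : Set (Fin m × Fin n))).index_mul_card
  rw [card_boardStabilizer, Nat.card_prod, Nat.card_fun, Nat.card_fun, Nat.card_fin,
    Nat.card_fin, ← pow_add, ← Nat.sub_add_cancel hC, pow_add] at key
  exact Nat.eq_of_mul_eq_mul_right (pow_pos Nat.card_pos _) key

end Stabilizer

theorem MulAction.index_dvd_card_of_forall_stabilizer_eq {G X : Type*} [Group G]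
    [MulAction G X] {H : Subgroup G} (h : ∀ x : X, stabilizer G x = H) :
    H.index ∣ Nat.card X := by
  have e : (Σ ω : orbitRel.Quotient G X, G ⧸ stabilizer G ω.out) ≃
      Σ _ : orbitRel.Quotient G X, G ⧸ H :=
    Equiv.sigmaCongrRight fun ω => Subgroup.quotientEquivOfEq (h ω.out)
  rw [Nat.card_congr ((selfEquivSigmaOrbitsQuotientStabilizer G X).trans
    (e.trans (Equiv.sigmaEquivProd _ _))), Nat.card_prod]
  exact dvd_mul_left _ _

section Scaling

variable {m n R : Type*} [Fintype n] [CommRing R]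

variable (R) in
def SupportRankMatrices (B : Set (m × n)) (d : ℕ) : Type _ :=
  {A : Matrix m n R // A.rank = d ∧ ∀ i j, A i j ≠ 0 ↔ (i, j) ∈ B}

variable {B : Set (m × n)} {d : ℕ}

@[ext]
theorem SupportRankMatrices.ext {A A' : SupportRankMatrices R B d}
    (h : ∀ i j, A.1 i j = A'.1 i j) : A = A' :=
  Subtype.ext (Matrix.ext h)

variable [Fintype m]

theorem Matrix.rank_of_units_mul_mul_units (s : m → Rˣ) (t : n → Rˣ) (A : Matrix m n R) :
    (of fun i j => (s i : R) * A i j * t j).rank = A.rank := by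
  classical
  have hdiag : (of fun i j => (s i : R) * A i j * t j) =
      diagonal (fun i => (s i : R)) * A * diagonal (fun j => (t j : R)) := by
    ext i j
    simp [mul_diagonal, diagonal_mul]
  rw [hdiag, rank_mul_eq_left_of_isUnit_det _ _ ((isUnit_iff_isUnit_det _).mp
      (isUnit_diagonal.mpr (Pi.isUnit_iff.mpr fun j => (t j).isUnit))),
    rank_mul_eq_right_of_isUnit_det _ _ ((isUnit_iff_isUnit_det _).mp
      (isUnit_diagonal.mpr (Pi.isUnit_iff.mpr fun i => (s i).isUnit)))]

instance : SMul ((m → Rˣ) × (n → Rˣ)) (SupportRankMatrices R B d) where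
  smul g A := ⟨of fun i j => (g.1 i : R) * A.1 i j * g.2 j,
    (Matrix.rank_of_units_mul_mul_units _ _ _).trans A.2.1,
    fun i j => by simpa using A.2.2 i j⟩

@[simp]
theorem SupportRankMatrices.smul_apply (g : (m → Rˣ) × (n → Rˣ))
    (A : SupportRankMatrices R B d) (i : m) (j : n) :
    (g • A).1 i j = g.1 i * A.1 i j * g.2 j :=
  rfl

instance : MulAction ((m → Rˣ) × (n → Rˣ)) (SupportRankMatrices R B d) where
  one_smul _ := SupportRankMatrices.ext fun _ _ => by simp
  mul_smul _ _ _ := SupportRankMatrices.ext fun _ _ => by simp; ring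

theorem SupportRankMatrices.stabilizer_eq [IsDomain R] (A : SupportRankMatrices R B d) :
    stabilizer ((m → Rˣ) × (n → Rˣ)) A = boardStabilizer Rˣ B := by
  ext g
  rw [mem_stabilizer_iff, mem_boardStabilizer, SupportRankMatrices.ext_iff]
  refine forall₂_congr fun i j => ?_
  rw [smul_apply, mul_right_comm, ← Units.val_mul, ← A.2.2 i j]
  by_cases hA : A.1 i j = 0
  · simp [hA]
  · rw [mul_eq_right₀ hA, Units.val_eq_one]
    exact ⟨fun h _ => h, fun h => h hA⟩

end Scaling

/-- `(q−1)^{m+n−C(G(B))}` divides `#S_d(B,q)`. -/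
theorem orbit_size_divides_sCount {m n : ℕ} (B : Finset (Fin m × Fin n)) (d : ℕ)
    (F : Type) [Field F] [Fintype F] :
    (Fintype.card F - 1) ^ (m + n - Nat.card (boardGraph B).ConnectedComponent) ∣
      sCount B F d := by
  show _ ∣ Nat.card (SupportRankMatrices F (B : Set (Fin m × Fin n)) d)
  rw [← Nat.card_eq_fintype_card, ← Nat.card_units, ← index_boardStabilizer]
  exact index_dvd_card_of_forall_stabilizer_eq SupportRankMatrices.stabilizer_eq
end

section
/- Let G be a connected bipartite graph with x row vertices and y column vertices, and let D ≥ 0 be an integer with x + y = D + 2. Suppose there exist a prime power q and an x×y matrix A over F_q of rank D such that the bipartite graph on [x] ⊔ [y] with an edge between row vertex i and column vertex j whenever A_{i,j} ≠ 0 is isomorphic to G by an isomorphism sending row vertices to row vertices and column vertices to column vertices. Then (G, D) is one of the following: G is the path with 2 row vertices and 2 column vertices (edge set of the form {(r,b),(r,c),(s,c)} with r ≠ s, b ≠ c) and D = 2; G is the complete bipartite graph K_{2,2} on 2 row vertices and 2 column vertices and D = 2; G is the path with 1 row vertex joined to 2 column vertices and D = 1; G is the path with 2 row vertices joined to 1 column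 vertex and D = 1. -/
/-- The bi-colored graph of a bipartite edge set `E ⊆ [x] × [y]`:
vertices `[x] ⊔ [y]`, edges between row vertex `i` and column vertex `j` with `(i,j) ∈ E`. -/
def bgOf {x y : ℕ} (E : Finset (Fin x × Fin y)) : SimpleGraph (Fin x ⊕ Fin y) :=
  SimpleGraph.fromRel (fun u v => ∃ i j, (i, j) ∈ E ∧ u = Sum.inl i ∧ v = Sum.inr j)

/-!
A matrix has rank at most its number of rows and of columns, so `x + y = D + 2` leaves only
`D ≤ 2` with `x, y ≤ 2`. A connected graph on `x + y` vertices has at least `x + y - 1` edges,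
while the support graph of a rank-zero matrix has none; this excludes `D = 0`, forces the full
star when `D = 1`, and for `D = 2` leaves at least three of the four cells of the `2 × 2` grid:
all four give `K_{2,2}`, and three give a path.
-/

open Finset

theorem Matrix.eq_zero_of_rank_eq_zero {m n K : Type*} [Fintype m] [Fintype n] [Field K]
    {A : Matrix m n K} (hA : A.rank = 0) : A = 0 := by
  classical
  rw [Matrix.rank, Submodule.finrank_eq_zero, LinearMap.range_eq_bot] at hA
  exact Matrix.toLin'.injective (by rw [Matrix.toLin'_apply', hA, map_zero])

theorem edgeSet_bgOf {x y : ℕ} (E : Finset (Fin x × Fin y)) :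
    (bgOf E).edgeSet = (fun p : Fin x × Fin y => s(Sum.inl p.1, Sum.inr p.2)) '' E := by
  ext ⟨u, v⟩
  simp only [SimpleGraph.mem_edgeSet, bgOf, SimpleGraph.fromRel_adj, Set.mem_image,
    Finset.mem_coe, Prod.exists, Sym2.eq_iff]
  aesop

theorem card_add_card_le_card_add_one_of_connected_bgOf {x y : ℕ} {E : Finset (Fin x × Fin y)}
    (hconn : (bgOf E).Connected) : x + y ≤ #E + 1 := by
  have hV := hconn.card_vert_le_card_edgeSet_add_one
  have hedges : Nat.card (bgOf E).edgeSet ≤ #E := by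
    rw [Nat.card_coe_set_eq, edgeSet_bgOf, ← Set.ncard_coe_finset E]
    exact Set.ncard_image_le E.finite_toSet
  simp only [Nat.card_eq_fintype_card, Fintype.card_sum, Fintype.card_fin] at hV
  omega

theorem eq_univ_or_eq_zigzag_of_three_le_card {E : Finset (Fin 2 × Fin 2)} (hE : 3 ≤ #E) :
    E = univ ∨ ∃ a d b c : Fin 2, a ≠ d ∧ b ≠ c ∧ E = {(a, b), (a, c), (d, c)} := by
  by_cases huniv : E = univ
  · exact .inl huniv
  obtain ⟨⟨d, b⟩, hp⟩ : ∃ p, p ∉ E := by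
    simpa only [Finset.eq_univ_iff_forall, not_forall] using huniv
  have hE : E = univ.erase (d, b) :=
    eq_of_subset_of_card_le (fun q hq => mem_erase.mpr ⟨fun h => hp (h ▸ hq), mem_univ q⟩)
      (by simpa using hE)
  -- in `Fin 2`, `d + 1` and `b + 1` are the other row and column
  refine .inr ⟨d + 1, d, b, b + 1, ?_⟩
  subst hE
  revert d b
  decide

theorem graph_rank_classification_general {x y : ℕ} (E : Finset (Fin x × Fin y)) (D : ℕ)
    (hconn : (bgOf E).Connected) (hxy : x + y = D + 2)
    (F : Type) [Field F]
    (h : ∃ (A : Matrix (Fin x) (Fin y) F) (σ : Equiv.Perm (Fin x)) (τ : Equiv.Perm (Fin y)),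
      A.rank = D ∧ ∀ i j, A (σ i) (τ j) ≠ 0 ↔ (i, j) ∈ E) :
    (x = 2 ∧ y = 2 ∧ D = 2 ∧
      ∃ (a d : Fin x) (b c : Fin y), a ≠ d ∧ b ≠ c ∧ E = {(a, b), (a, c), (d, c)}) ∨
    (x = 2 ∧ y = 2 ∧ D = 2 ∧ E = Finset.univ) ∨
    (x = 1 ∧ y = 2 ∧ D = 1 ∧
      ∃ (a : Fin x) (b c : Fin y), b ≠ c ∧ E = {(a, b), (a, c)}) ∨
    (x = 2 ∧ y = 1 ∧ D = 1 ∧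
      ∃ (a d : Fin x) (c : Fin y), a ≠ d ∧ E = {(a, c), (d, c)}) := by
  obtain ⟨A, σ, τ, hrank, hsupp⟩ := h
  have hDx : D ≤ x := hrank ▸ A.rank_le_height
  have hDy : D ≤ y := hrank ▸ A.rank_le_width
  have hedges := card_add_card_le_card_add_one_of_connected_bgOf hconn
  have hcard : #E ≤ x * y := by simpa using card_le_univ E
  have hfull : x * y ≤ #E → E = univ := fun hle =>
    eq_univ_of_card E (by simp only [Fintype.card_prod, Fintype.card_fin]; omega)
  rcases (by omega : D = 0 ∨ (x = 1 ∧ y = 2) ∨ (x = 2 ∧ y = 1) ∨ (x = 2 ∧ y = 2))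
    with hD | ⟨rfl, rfl⟩ | ⟨rfl, rfl⟩ | ⟨rfl, rfl⟩
  · have hA : A = 0 := Matrix.eq_zero_of_rank_eq_zero (hrank.trans hD)
    have hE : E = ∅ := eq_empty_of_forall_notMem fun p hp => by
      simpa [hA] using (hsupp p.1 p.2).mpr hp
    rw [hE, card_empty] at hedges
    omega
  · have hE : E = univ := hfull (by omega)
    exact .inr <| .inr <| .inl ⟨rfl, rfl, by omega, 0, 0, 1, by decide, by rw [hE]; decide⟩
  · have hE : E = univ := hfull (by omega)
    exact .inr <| .inr <| .inr ⟨rfl, rfl, by omega, 0, 1, 0, by decide, by rw [hE]; decide⟩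
  · rcases eq_univ_or_eq_zigzag_of_three_le_card (by omega : 3 ≤ #E) with hE | hE
    · exact .inr <| .inl ⟨rfl, rfl, by omega, hE⟩
    · exact .inl ⟨rfl, rfl, by omega, hE⟩

/-- Classification of connected bi-colored graphs `G` (given by the edge set `E`) with
`x` row vertices, `y` column vertices, realizable as the support graph of a rank `D` matrix
over a finite field, with `x + y = D + 2`:
it is the Z graph with `D = 2`, the shoelace graph `K_{2,2}` with `D = 2`,
or one of the two wedge graphs with `D = 1`. -/
theorem graph_rank_classification {x y : ℕ} (E : Finset (Fin x × Fin y)) (D : ℕ)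
    (hconn : (bgOf E).Connected) (hxy : x + y = D + 2)
    (F : Type) [Field F] [Fintype F]
    (h : ∃ (A : Matrix (Fin x) (Fin y) F) (σ : Equiv.Perm (Fin x)) (τ : Equiv.Perm (Fin y)),
      A.rank = D ∧ ∀ i j, A (σ i) (τ j) ≠ 0 ↔ (i, j) ∈ E) :
    (x = 2 ∧ y = 2 ∧ D = 2 ∧
      ∃ (a d : Fin x) (b c : Fin y), a ≠ d ∧ b ≠ c ∧ E = {(a, b), (a, c), (d, c)}) ∨
    (x = 2 ∧ y = 2 ∧ D = 2 ∧ E = Finset.univ) ∨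
    (x = 1 ∧ y = 2 ∧ D = 1 ∧
      ∃ (a : Fin x) (b c : Fin y), b ≠ c ∧ E = {(a, b), (a, c)}) ∨
    (x = 2 ∧ y = 1 ∧ D = 1 ∧
      ∃ (a d : Fin x) (c : Fin y), a ≠ d ∧ E = {(a, c), (d, c)}) :=
  graph_rank_classification_general E D hconn hxy F h
end

section
/- Let B ⊆ [m]×[n] be a board with m ≤ n, and let k ≥ 0 be fixed. Then the following identity of polynomials in t holds: Σ_{i=0}^{m} r_i(B) · ((n−i)!/(n−m)!) · i(i−1)⋯(i−k+1) · (t−1)^i = Σ_{i=k}^{m} i(i−1)⋯(i−k+1) · (t−1)^k · t^{i−k} · h_i(B). -/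
/-- A set of cells is non-attacking if its cells have pairwise distinct rows
and pairwise distinct columns. -/
def nonattacking {m n : ℕ} (s : Finset (Fin m × Fin n)) : Prop :=
  ∀ p ∈ s, ∀ p' ∈ s, p ≠ p' → p.1 ≠ p'.1 ∧ p.2 ≠ p'.2

/-- The classical rook number: the number of non-attacking `i`-element subsets of `B`. -/
noncomputable def rook {m n : ℕ} (B : Finset (Fin m × Fin n)) (i : ℕ) : ℕ :=
  Nat.card {s : Finset (Fin m × Fin n) // s ⊆ B ∧ nonattacking s ∧ s.card = i}

/-- The classical hit number: the number of non-attacking `m`-element subsets `σ` of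
`[m]×[n]` with `#(σ ∩ B) = i`. -/
noncomputable def hit {m n : ℕ} (B : Finset (Fin m × Fin n)) (i : ℕ) : ℕ :=
  Nat.card {σ : Finset (Fin m × Fin n) // nonattacking σ ∧ σ.card = m ∧ (σ ∩ B).card = i}

namespace RookHitAux

open Finset Polynomial

instance {m n : ℕ} : DecidablePred (@nonattacking m n) := fun _ => by
  unfold nonattacking; infer_instance

variable {m n : ℕ}

/-- The graph of a function as a finset of cells. -/
def Phi (f : Fin m → Fin n) : Finset (Fin m × Fin n) :=
  Finset.univ.image fun x => (x, f x)

lemma mem_Phi {f : Fin m → Fin n} {p : Fin m × Fin n} : p ∈ Phi f ↔ f p.1 = p.2 := by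
  constructor
  · rintro hp
    simp only [Phi, mem_image, mem_univ, true_and] at hp
    obtain ⟨x, hx⟩ := hp
    cases hx; rfl
  · intro h
    simp only [Phi, mem_image, mem_univ, true_and]
    exact ⟨p.1, by rw [h]⟩

lemma Phi_card (f : Fin m → Fin n) : (Phi f).card = m := by
  rw [Phi, Finset.card_image_of_injective _ (fun a b h => (Prod.mk.injEq _ _ _ _).mp h |>.1),
    Finset.card_univ, Fintype.card_fin]

lemma Phi_nonattacking {f : Fin m → Fin n} (hf : Function.Injective f) :
    nonattacking (Phi f) := by
  intro p hp p' hp' hne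
  rw [mem_Phi] at hp hp'
  constructor
  · intro h1
    exact hne (Prod.ext h1 (by rw [← hp, ← hp', h1]))
  · intro h2
    exact hne (Prod.ext (hf (by rw [hp, hp', h2])) h2)

lemma Phi_inj : Function.Injective (Phi (m := m) (n := n)) := by
  intro f g h
  funext x
  have : (x, f x) ∈ Phi g := by rw [← h]; exact mem_Phi.mpr rfl
  exact (mem_Phi.mp this).symm

lemma nonattacking_mono {s t : Finset (Fin m × Fin n)} (h : s ⊆ t)
    (ht : nonattacking t) : nonattacking s :=
  fun p hp p' hp' hne => ht p (h hp) p' (h hp') hne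

lemma card_le_of_nonattacking {s : Finset (Fin m × Fin n)} (hs : nonattacking s) :
    s.card ≤ m := by
  have hinj : Set.InjOn Prod.fst (s : Set (Fin m × Fin n)) := by
    intro p hp p' hp' h
    by_contra hne
    exact (hs p hp p' hp' hne).1 h
  calc s.card = (s.image Prod.fst).card := (Finset.card_image_of_injOn hinj).symm
    _ ≤ m := by
      have := Finset.card_le_univ (s.image Prod.fst)
      simpa using this

lemma card_image_fst {s : Finset (Fin m × Fin n)} (hs : nonattacking s) :
    (s.image Prod.fst).card = s.card := by
  apply Finset.card_image_of_injOn
  intro p hp p' hp' h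
  by_contra hne
  exact (hs p hp p' hp' hne).1 h

lemma card_image_snd {s : Finset (Fin m × Fin n)} (hs : nonattacking s) :
    (s.image Prod.snd).card = s.card := by
  apply Finset.card_image_of_injOn
  intro p hp p' hp' h
  by_contra hne
  exact (hs p hp p' hp' hne).2 h

/-- Every non-attacking `m`-subset is the graph of an injective function. -/
lemma exists_Phi {σ : Finset (Fin m × Fin n)} (h1 : nonattacking σ) (h2 : σ.card = m) :
    ∃ f : Fin m → Fin n, Function.Injective f ∧ Phi f = σ := by
  have hR : σ.image Prod.fst = Finset.univ := by
    apply Finset.eq_univ_of_card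
    rw [card_image_fst h1, h2, Fintype.card_fin]
  have hex : ∀ x : Fin m, ∃! p, p ∈ σ ∧ p.1 = x := by
    intro x
    have : x ∈ σ.image Prod.fst := by rw [hR]; exact mem_univ x
    obtain ⟨p, hp, hpx⟩ := Finset.mem_image.mp this
    refine ⟨p, ⟨hp, hpx⟩, ?_⟩
    rintro q ⟨hq, hqx⟩
    by_contra hne
    exact (h1 q hq p hp hne).1 (by rw [hqx, hpx])
  set f : Fin m → Fin n := fun x => (σ.choose (fun p => p.1 = x) (hex x)).2 with hf
  have hfs : ∀ p ∈ σ, f p.1 = p.2 := by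
    intro p hp
    have h := (hex p.1).unique ⟨σ.choose_mem _ (hex p.1), σ.choose_property (fun q => q.1 = p.1) (hex p.1)⟩ ⟨hp, rfl⟩
    exact congrArg Prod.snd h
  have hmem : ∀ x, (x, f x) ∈ σ := by
    intro x
    have h1' := σ.choose_mem (fun p => p.1 = x) (hex x)
    have h2' := σ.choose_property (fun p => p.1 = x) (hex x)
    have : (σ.choose (fun p => p.1 = x) (hex x)) = (x, f x) := Prod.ext h2' rfl
    rwa [this] at h1'
  have hinj : Function.Injective f := by
    intro x x' hxx
    by_contra hne
    have h := h1 (x, f x) (hmem x) (x', f x') (hmem x')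
      (by simp [hne])
    exact h.2 hxx
  refine ⟨f, hinj, ?_⟩
  have hsub : σ ⊆ Phi f := fun p hp => mem_Phi.mpr (hfs p hp)
  exact (Finset.eq_of_subset_of_card_le hsub (by rw [Phi_card, h2])).symm

/-- The number of injective functions whose graph contains a fixed non-attacking set. -/
lemma count_ext (hmn : m ≤ n) :
    ∀ d (S : Finset (Fin m × Fin n)), nonattacking S → S.card + d = m →
    (Finset.univ.filter
        (fun f : Fin m → Fin n => Function.Injective f ∧ S ⊆ Phi f)).card
      = (n - S.card).descFactorial d := by
  intro d
  induction d with
  | zero =>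
    intro S hS hcard
    rw [Nat.add_zero] at hcard
    obtain ⟨f₀, hf₀, hPhi₀⟩ := exists_Phi hS hcard
    have : Finset.univ.filter
        (fun f : Fin m → Fin n => Function.Injective f ∧ S ⊆ Phi f) = {f₀} := by
      ext g
      simp only [mem_filter, mem_univ, true_and, mem_singleton]
      constructor
      · rintro ⟨hg, hsub⟩
        have : S = Phi g := Finset.eq_of_subset_of_card_le hsub (by rw [Phi_card, hcard])
        exact Phi_inj (by rw [← this, hPhi₀])
      · rintro rfl
        exact ⟨hf₀, hPhi₀ ▸ Finset.Subset.refl _⟩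
    rw [this, Finset.card_singleton, Nat.descFactorial_zero]
  | succ d ih =>
    intro S hS hcard
    have hSm : S.card < m := by omega
    have hSn : S.card < n := lt_of_lt_of_le hSm hmn
    set R := S.image Prod.fst with hRdef
    set Cc := S.image Prod.snd with hCdef
    have hRcard : R.card = S.card := card_image_fst hS
    have hCcard : Cc.card = S.card := card_image_snd hS
    obtain ⟨x₀, hx₀⟩ : ∃ x₀ : Fin m, x₀ ∉ R := by
      have : (Rᶜ : Finset (Fin m)).Nonempty := by
        rw [← Finset.card_pos, Finset.card_compl, Fintype.card_fin, hRcard]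
        omega
      obtain ⟨x, hx⟩ := this
      exact ⟨x, Finset.mem_compl.mp hx⟩
    rw [Finset.card_eq_sum_card_fiberwise
      (f := fun f : Fin m → Fin n => f x₀) (t := Finset.univ)
      (fun f _ => mem_univ _)]
    have hfiber : ∀ y : Fin n,
        ((Finset.univ.filter
          (fun f : Fin m → Fin n => Function.Injective f ∧ S ⊆ Phi f)).filter
            (fun f => f x₀ = y))
        = Finset.univ.filter
            (fun f : Fin m → Fin n => Function.Injective f ∧ insert (x₀, y) S ⊆ Phi f) := by
      intro y
      ext f
      simp only [Finset.filter_filter, mem_filter, mem_univ, true_and,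
        Finset.insert_subset_iff, mem_Phi]
      tauto
    have hzero : ∀ y ∈ Cc, ((Finset.univ.filter
          (fun f : Fin m → Fin n => Function.Injective f ∧ S ⊆ Phi f)).filter
            (fun f => f x₀ = y)).card = 0 := by
      intro y hy
      rw [Finset.card_eq_zero, hfiber y, Finset.filter_eq_empty_iff]
      rintro f - ⟨hinj, hsub⟩
      obtain ⟨p, hp, hpy⟩ := Finset.mem_image.mp hy
      have h1 : f x₀ = y := mem_Phi.mp (hsub (Finset.mem_insert_self _ _))
      have h2 : f p.1 = p.2 := mem_Phi.mp (hsub (Finset.mem_insert_of_mem hp))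
      have : x₀ = p.1 := hinj (by rw [h1, h2, hpy])
      exact hx₀ (this ▸ Finset.mem_image_of_mem Prod.fst hp)
    have hval : ∀ y ∉ Cc, ((Finset.univ.filter
          (fun f : Fin m → Fin n => Function.Injective f ∧ S ⊆ Phi f)).filter
            (fun f => f x₀ = y)).card = (n - (S.card + 1)).descFactorial d := by
      intro y hy
      rw [hfiber y]
      have hnot : (x₀, y) ∉ S := fun h => hx₀ (Finset.mem_image_of_mem Prod.fst h)
      have hna : nonattacking (insert (x₀, y) S) := by
        intro p hp p' hp' hne
        rcases Finset.mem_insert.mp hp with rfl | hp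
        · rcases Finset.mem_insert.mp hp' with rfl | hp'
          · exact absurd rfl hne
          · constructor
            · intro h; exact hx₀ (Finset.mem_image.mpr ⟨p', hp', h.symm⟩)
            · intro h; exact hy (Finset.mem_image.mpr ⟨p', hp', h.symm⟩)
        · rcases Finset.mem_insert.mp hp' with rfl | hp'
          · constructor
            · intro h; exact hx₀ (Finset.mem_image.mpr ⟨p, hp, h⟩)
            · intro h; exact hy (Finset.mem_image.mpr ⟨p, hp, h⟩)
          · exact hS p hp p' hp' hne
      have hc : (insert (x₀, y) S).card = S.card + 1 := Finset.card_insert_of_notMem hnot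
      rw [ih (insert (x₀, y) S) hna (by omega), hc]
    rw [← Finset.sum_add_sum_compl Cc]
    rw [Finset.sum_congr rfl hzero, Finset.sum_const 0, smul_zero, zero_add]
    rw [Finset.sum_congr rfl (fun y hy => hval y (Finset.mem_compl.mp hy))]
    rw [Finset.sum_const, Finset.card_compl, Fintype.card_fin, hCcard, smul_eq_mul]
    have h1 : n - S.card = (n - (S.card + 1)) + 1 := by omega
    rw [h1, Nat.succ_descFactorial_succ]

lemma rook_eq (B : Finset (Fin m × Fin n)) (i : ℕ) :
    rook B i = (Finset.univ.filter
      (fun s : Finset (Fin m × Fin n) => s ⊆ B ∧ nonattacking s ∧ s.card = i)).card := by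
  rw [rook, Nat.card_eq_fintype_card, Fintype.card_subtype]

lemma hit_eq (B : Finset (Fin m × Fin n)) (i : ℕ) :
    hit B i = (Finset.univ.filter
      (fun f : Fin m → Fin n => Function.Injective f ∧ (Phi f ∩ B).card = i)).card := by
  rw [hit, Nat.card_eq_fintype_card, Fintype.card_subtype]
  symm
  apply Finset.card_bij (fun f _ => Phi f)
  · intro f hf
    simp only [mem_filter, mem_univ, true_and] at hf ⊢
    exact ⟨Phi_nonattacking hf.1, Phi_card f, hf.2⟩
  · intro f hf g hg h
    exact Phi_inj h
  · intro σ hσ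
    simp only [mem_filter, mem_univ, true_and] at hσ
    obtain ⟨f, hf, hPhi⟩ := exists_Phi hσ.1 hσ.2.1
    exact ⟨f, by simp only [mem_filter, mem_univ, true_and]; exact ⟨hf, by rw [hPhi]; exact hσ.2.2⟩, hPhi⟩

/-- The base rook–hit identity. -/
lemma base (hmn : m ≤ n) (B : Finset (Fin m × Fin n)) :
    ∑ i ∈ Finset.range (m + 1),
        C ((rook B i : ℚ) * (((n - i).factorial : ℚ) / ((n - m).factorial : ℚ))) * (X - 1) ^ i
      = ∑ i ∈ Finset.range (m + 1), C ((hit B i : ℚ)) * X ^ i := by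
  classical
  set I : Finset (Fin m → Fin n) := Finset.univ.filter Function.Injective with hI
  -- RHS as a sum over injective functions
  have hRHS : ∑ i ∈ Finset.range (m + 1), C ((hit B i : ℚ)) * X ^ i
      = ∑ f ∈ I, (X : ℚ[X]) ^ ((Phi f ∩ B).card) := by
    rw [← Finset.sum_fiberwise_of_maps_to
      (g := fun f : Fin m → Fin n => (Phi f ∩ B).card) (t := Finset.range (m + 1))
      (fun f _ => by
        simp only [Finset.mem_range]
        have h1 : (Phi f ∩ B).card ≤ (Phi f).card :=
          Finset.card_le_card Finset.inter_subset_left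
        rw [Phi_card] at h1; omega)
      (fun f => (X : ℚ[X]) ^ ((Phi f ∩ B).card))]
    apply Finset.sum_congr rfl
    intro i _
    rw [Finset.sum_congr rfl
      (fun f hf => by rw [(Finset.mem_filter.mp hf).2]),
      Finset.sum_const]
    have hcard : (I.filter fun f => (Phi f ∩ B).card = i).card = hit B i := by
      rw [hI, Finset.filter_filter, hit_eq]
    rw [hcard, nsmul_eq_mul, ← map_natCast (C : ℚ →+* ℚ[X]) (hit B i)]
  -- binomial expansion for each f
  have hexp : ∀ f : Fin m → Fin n, (X : ℚ[X]) ^ ((Phi f ∩ B).card)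
      = ∑ S ∈ (Phi f ∩ B).powerset, ((X : ℚ[X]) - 1) ^ S.card := by
    intro f
    have h := Finset.prod_add (fun _ : Fin m × Fin n => (X : ℚ[X]) - 1)
      (fun _ => (1 : ℚ[X])) (Phi f ∩ B)
    simp only [Finset.prod_const, sub_add_cancel, Finset.prod_const_one, one_pow, mul_one] at h
    exact h
  -- swap the order of summation
  have hswap : ∑ f ∈ I, ∑ S ∈ (Phi f ∩ B).powerset, ((X : ℚ[X]) - 1) ^ S.card
      = ∑ S ∈ Finset.univ.filter
          (fun S : Finset (Fin m × Fin n) => S ⊆ B ∧ nonattacking S),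
          ∑ f ∈ I.filter (fun f => S ⊆ Phi f), ((X : ℚ[X]) - 1) ^ S.card := by
    apply Finset.sum_comm'
    intro f S
    simp only [hI, Finset.mem_filter, Finset.mem_univ, true_and, Finset.mem_powerset,
      Finset.subset_inter_iff]
    constructor
    · rintro ⟨hf, hPhi, hB⟩
      exact ⟨⟨hf, hPhi⟩, hB, nonattacking_mono hPhi (Phi_nonattacking hf)⟩
    · rintro ⟨⟨hf, hPhi⟩, hB, -⟩
      exact ⟨hf, hPhi, hB⟩
  -- evaluate the inner sums
  have hinner : ∀ S ∈ Finset.univ.filter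
      (fun S : Finset (Fin m × Fin n) => S ⊆ B ∧ nonattacking S),
      ∑ f ∈ I.filter (fun f => S ⊆ Phi f), ((X : ℚ[X]) - 1) ^ S.card
        = ((n - S.card).descFactorial (m - S.card)) • ((X : ℚ[X]) - 1) ^ S.card := by
    intro S hS
    rw [Finset.mem_filter] at hS
    rw [Finset.sum_const]
    congr 1
    rw [hI, Finset.filter_filter]
    exact count_ext hmn (m - S.card) S hS.2.2
      (by have := card_le_of_nonattacking hS.2.2; omega)
  -- group by cardinality
  rw [hRHS, Finset.sum_congr rfl (fun f _ => hexp f), hswap,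
    Finset.sum_congr rfl hinner,
    ← Finset.sum_fiberwise_of_maps_to
      (g := fun S : Finset (Fin m × Fin n) => S.card) (t := Finset.range (m + 1))
      (fun S hS => by
        simp only [Finset.mem_range]
        have := card_le_of_nonattacking (Finset.mem_filter.mp hS).2.2; omega)]
  apply Finset.sum_congr rfl
  intro i hi
  have hi' : i ≤ m := by rw [Finset.mem_range] at hi; omega
  rw [Finset.sum_congr rfl (fun S hS => by
      rw [(Finset.mem_filter.mp hS).2]), Finset.sum_const]
  have hcard : ((Finset.univ.filter
      (fun S : Finset (Fin m × Fin n) => S ⊆ B ∧ nonattacking S)).filter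
        (fun S => S.card = i)).card = rook B i := by
    rw [Finset.filter_filter, rook_eq]
    congr 1
    apply Finset.filter_congr
    intro S _
    tauto
  rw [hcard]
  have hfact : (((n - i).descFactorial (m - i) : ℚ))
      = ((n - i).factorial : ℚ) / ((n - m).factorial : ℚ) := by
    rw [eq_div_iff (by exact_mod_cast (Nat.factorial_ne_zero (n - m)))]
    have h1 : (n - i) - (m - i) = n - m := by omega
    have h2 := Nat.factorial_mul_descFactorial (show m - i ≤ n - i by omega)
    rw [h1] at h2
    exact_mod_cast (mul_comm ((n - m).factorial) ((n - i).descFactorial (m - i)) ▸ h2)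
  rw [smul_smul, nsmul_eq_mul,
    ← map_natCast (C : ℚ →+* ℚ[X]) (rook B i * (n - i).descFactorial (m - i))]
  congr 1
  push_cast
  rw [hfact]

lemma smul_aux1 (a : ℚ) (e : ℕ) (p q : ℚ[X]) :
    p * (C a * (e • q)) = C (a * (e : ℚ)) * (p * q) := by
  rw [nsmul_eq_mul, ← map_natCast (C : ℚ →+* ℚ[X]) e, Polynomial.C_mul]
  ring

lemma smul_aux2 (a c : ℚ) (p q : ℚ[X]) :
    p * (C a * (c • q)) = C (c * a) * p * q := by
  rw [Polynomial.smul_eq_C_mul, Polynomial.C_mul]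
  ring

end RookHitAux

open Polynomial in
/-- `Σ_{i=0}^m r_i(B) ((n−i)!/(n−m)!) (i)_k (t−1)^i = Σ_{i=k}^m (i)_k (t−1)^k t^{i−k} h_i(B)`. -/
theorem rook_hit_falling_factorial {m n : ℕ} (hmn : m ≤ n)
    (B : Finset (Fin m × Fin n)) (k : ℕ) :
    ∑ i ∈ Finset.range (m + 1),
        C ((rook B i : ℚ) * (((n - i).factorial : ℚ) / ((n - m).factorial : ℚ)) *
          (i.descFactorial k : ℚ)) * (X - 1) ^ i =
      ∑ i ∈ Finset.Icc k m,
        C ((i.descFactorial k : ℚ) * (hit B i : ℚ)) * (X - 1) ^ k * X ^ (i - k) := by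
  classical
  have hbase := RookHitAux.base hmn B
  have key := congrArg (fun p : ℚ[X] => (X - 1) ^ k * (derivative^[k] p)) hbase
  -- left-hand side
  have hL : (X - 1) ^ k * (derivative^[k] (∑ i ∈ Finset.range (m + 1),
        C ((rook B i : ℚ) * (((n - i).factorial : ℚ) / ((n - m).factorial : ℚ))) * (X - 1) ^ i))
      = ∑ i ∈ Finset.range (m + 1),
        C ((rook B i : ℚ) * (((n - i).factorial : ℚ) / ((n - m).factorial : ℚ)) *
          (i.descFactorial k : ℚ)) * (X - 1) ^ i := by
    rw [Polynomial.iterate_derivative_sum, Finset.mul_sum]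
    apply Finset.sum_congr rfl
    intro i _
    rw [show ((1 : ℚ[X]) = C 1) from Polynomial.C_1.symm,
      Polynomial.iterate_derivative_C_mul, Polynomial.iterate_derivative_X_sub_pow]
    rcases le_or_gt k i with h | h
    · rw [RookHitAux.smul_aux1, ← pow_add, show k + (i - k) = i by omega]
    · have hd : i.descFactorial k = 0 := Nat.descFactorial_eq_zero_iff_lt.mpr h
      simp [hd]
  -- right-hand side
  have hR : (X - 1) ^ k * (derivative^[k] (∑ i ∈ Finset.range (m + 1),
        C ((hit B i : ℚ)) * X ^ i))
      = ∑ i ∈ Finset.Icc k m,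
        C ((i.descFactorial k : ℚ) * (hit B i : ℚ)) * (X - 1) ^ k * X ^ (i - k) := by
    rw [Polynomial.iterate_derivative_sum, Finset.mul_sum]
    have hterm : ∀ i, (X - 1) ^ k * (derivative^[k] (C ((hit B i : ℚ)) * X ^ i))
        = C ((i.descFactorial k : ℚ) * (hit B i : ℚ)) * (X - 1) ^ k * X ^ (i - k) := by
      intro i
      rw [Polynomial.iterate_derivative_C_mul, Polynomial.iterate_derivative_X_pow_eq_smul,
        RookHitAux.smul_aux2]
    rw [Finset.sum_congr rfl (fun i _ => hterm i)]
    symm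
    apply Finset.sum_subset
    · intro i hi
      rw [Finset.mem_Icc] at hi
      rw [Finset.mem_range]
      omega
    · intro i hi hni
      rw [Finset.mem_range] at hi
      rw [Finset.mem_Icc] at hni
      have : i < k := by omega
      have hd : i.descFactorial k = 0 := Nat.descFactorial_eq_zero_iff_lt.mpr this
      simp [hd]
  rw [← hL, ← hR]
  exact key
end
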